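/- Let (σ_j) be a nonincreasing sequence of nonnegative reals whose squares are summable, and suppose Σ_{j=k+1}^∞ σ_j² ≤ C²·(k−r−1)^{−(2r+1)} for some constants C > 0 and integer r ≥ 0, valid for all k > r+1. Then for every k > 2(r+1), σ_k ≤ 2^{r+3/2}·C / (√k · (k−2r−2)^{r+1/2}). -/

import Mathlib

/-!
The bound is monotonicity plus the tail hypothesis at `k = m`: the `m` terms
`σ_{m+1}², …, σ_{2m}²` of the tail after index `m` each dominate `σ_{2m}²`, so
`m σ_{2m}² ≤ C² (m - r - 1)^{-(2r+1)}`; taking square roots gives the claim.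
-/

lemma Antitone.mul_le_tsum_add {f : ℕ → ℝ} (hf : Antitone f) (hf0 : 0 ≤ f) (hs : Summable f)
    (k n : ℕ) : n * f (k + n) ≤ ∑' j, f (k + 1 + j) := by
  have hs' : Summable fun j => f (k + 1 + j) := by
    simpa only [add_comm (k + 1)] using (summable_nat_add_iff (k + 1)).mpr hs
  calc (n : ℝ) * f (k + n) = (Finset.range n).card • f (k + n) := by simp
    _ ≤ ∑ j ∈ Finset.range n, f (k + 1 + j) :=
      Finset.card_nsmul_le_sum _ _ _ fun j hj => hf (by simp at hj; omega)
    _ ≤ ∑' j, f (k + 1 + j) := hs'.sum_le_tsum _ fun j _ => hf0 _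

lemma div_sqrt_mul_rpow_sq (C : ℝ) {m x : ℝ} (hm : 0 ≤ m) (hx : 0 ≤ x) (r : ℕ) :
    (C / (√m * x ^ ((r : ℝ) + 1 / 2))) ^ 2 = C ^ 2 / (m * x ^ (2 * r + 1)) := by
  rw [div_pow, mul_pow, Real.sq_sqrt hm, ← Real.rpow_natCast (x ^ _), ← Real.rpow_mul hx,
    ← Real.rpow_natCast x]
  push_cast
  ring_nf

/-- Let (σ_j) be a nonincreasing sequence of nonnegative reals with summable
squares satisfying the tail bound Σ_{j=k+1}^∞ σ_j² ≤ C²·(k−r−1)^{−(2r+1)} for all k > r+1.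
Then (formalized for even indices k = 2m with m > r+1, per the context)
σ_{2m} ≤ C·m^{−1/2}·(m−r−1)^{−(r+1/2)}, i.e. σ_k = O(k^{−(r+1)}). -/
theorem stmt4 (σ : ℕ → ℝ) (hnn : ∀ j, 0 ≤ σ j) (hmono : Antitone σ)
    (hsum : Summable fun j => (σ j) ^ 2)
    (C : ℝ) (hC : 0 < C) (r : ℕ)
    (htail : ∀ k : ℕ, r + 1 < k →
      ∑' j : ℕ, (σ (k + 1 + j)) ^ 2 ≤ C ^ 2 / ((k : ℝ) - r - 1) ^ (2 * r + 1)) :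
    ∀ m : ℕ, r + 1 < m →
      σ (2 * m) ≤ C / (Real.sqrt m * ((m : ℝ) - r - 1) ^ ((r : ℝ) + 1 / 2)) := by
  intro m hm
  have hm0 : (0 : ℝ) < m := by exact_mod_cast (show 0 < m by omega)
  have hx : (0 : ℝ) < m - r - 1 := by
    have : (r : ℝ) + 1 < m := by exact_mod_cast hm
    linarith
  have hsq : Antitone fun j => σ j ^ 2 := fun i j hij => pow_le_pow_left₀ (hnn j) (hmono hij) 2
  have hkey : m * σ (2 * m) ^ 2 ≤ C ^ 2 / ((m : ℝ) - r - 1) ^ (2 * r + 1) := by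
    simpa only [two_mul] using
      (hsq.mul_le_tsum_add (fun j => sq_nonneg _) hsum m m).trans (htail m hm)
  rw [← pow_le_pow_iff_left₀ (hnn _) (by positivity) two_ne_zero,
    div_sqrt_mul_rpow_sq C hm0.le hx.le, le_div_iff₀ (by positivity)]
  rw [le_div_iff₀ (by positivity)] at hkey
  linarith
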